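/- A function f : L_n^r → L_n is Moisil representable if and only if for all a_1,...,a_r ∈ L_n, f(a_1,...,a_r) ∈ {0, 1, a_1, ..., a_r, 1-a_1, ..., 1-a_r}. -/

import Mathlib

/-- The underlying set of the standard LM_n-algebra: {0, 1/n, ..., (n-1)/n, 1} ⊆ ℚ. -/
def Ln (n : ℕ) : Set ℚ := {x | ∃ j : ℕ, j ≤ n ∧ x = (j : ℚ) / n}

/-- The Chrysippian endomorphism Δ_i on ℚ: on L_n, Δ_i(j/n) = 1 iff i + j ≥ n + 1. -/
def Delta (n i : ℕ) (x : ℚ) : ℚ := if (n : ℚ) + 1 ≤ (i : ℚ) + x * n then 1 else 0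

/-- Terms in the signature (∨, ∧, N, 0, 1, Δ_1, ..., Δ_n) over variables x_1, ..., x_r. -/
inductive LMTerm (r : ℕ) where
  | var (i : Fin r)
  | zero
  | one
  | neg (t : LMTerm r)
  | sup (t u : LMTerm r)
  | inf (t u : LMTerm r)
  | delta (i : ℕ) (t : LMTerm r)

/-- Evaluation of a term in the standard LM_n-algebra under a valuation φ. -/
def LMTerm.eval (n : ℕ) {r : ℕ} (φ : Fin r → ℚ) : LMTerm r → ℚ
  | .var i => φ i
  | .zero => 0
  | .one => 1
  | .neg t => 1 - t.eval n φ
  | .sup t u => max (t.eval n φ) (u.eval n φ)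
  | .inf t u => min (t.eval n φ) (u.eval n φ)
  | .delta i t => Delta n i (t.eval n φ)

/-- A function is Moisil representable if some term evaluates to it under
every valuation into L_n. -/
def Representable (n r : ℕ) (f : (Fin r → ℚ) → ℚ) : Prop :=
  ∃ t : LMTerm r, ∀ φ : Fin r → ℚ, (∀ i, φ i ∈ Ln n) → t.eval n φ = f φ

/-- The set {0, 1, a_1, ..., a_r, 1 - a_1, ..., 1 - a_r}. -/
def Mset (r : ℕ) (a : Fin r → ℚ) : Set ℚ :=
  {x | x = 0 ∨ x = 1 ∨ ∃ i : Fin r, x = a i ∨ x = 1 - a i}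

/-!
Every operation of the signature keeps values inside `{0, 1, a_i, 1 - a_i}`: `N` swaps `a_i`
and `1 - a_i`, `∨` and `∧` pick one of their arguments, and each `Δ_i` is `{0, 1}`-valued.
Conversely, `Δ_{n+1-j} x ∧ N Δ_{n-j} x` is the indicator of `x = j/n`, so the conjunction of
such terms over the coordinates is the indicator of a grid point `v` of `L_n^r`. A function
whose values lie in that set is then the join over all grid points `v` of the indicator of `v`
met with an atom (`0`, `1`, `x_i` or `N x_i`) taking the value `f v` at `v`.
-/

open Finset

lemma Ln_subset_Icc (n : ℕ) : Ln n ⊆ Set.Icc 0 1 := by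
  rintro _ ⟨j, hj, rfl⟩
  exact ⟨by positivity, div_le_one_of_le₀ (by exact_mod_cast hj) n.cast_nonneg⟩

lemma Mset_subset_Icc {r : ℕ} {a : Fin r → ℚ} (ha : ∀ i, a i ∈ Set.Icc 0 1) :
    Mset r a ⊆ Set.Icc 0 1 := by
  rintro _ (rfl | rfl | ⟨i, rfl | rfl⟩)
  · simp
  · simp
  · exact ha i
  · exact ⟨by linarith [(ha i).2], by linarith [(ha i).1]⟩

lemma Delta_eq_zero_or_eq_one (n i : ℕ) (x : ℚ) : Delta n i x = 0 ∨ Delta n i x = 1 := by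
  unfold Delta
  split_ifs <;> simp

lemma Delta_natCast_div {n k : ℕ} (m : ℕ) (hk : k ≤ n) :
    Delta n m ((k : ℚ) / n) = if n + 1 ≤ m + k then 1 else 0 := by
  have hkn : (k / n : ℚ) * n = k := by
    rcases Nat.eq_zero_or_pos n with rfl | hn
    · simp [Nat.le_zero.mp hk]
    · field_simp
  simp only [Delta, hkn]
  norm_cast

namespace LMTerm

variable {r : ℕ}

lemma eval_mem_Mset (n : ℕ) (φ : Fin r → ℚ) (t : LMTerm r) : t.eval n φ ∈ Mset r φ := by
  induction t with
  | var i => exact Or.inr (Or.inr ⟨i, Or.inl rfl⟩)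
  | zero => exact Or.inl rfl
  | one => exact Or.inr (Or.inl rfl)
  | neg t ih =>
    obtain h | h | ⟨i, h | h⟩ := ih <;> simp only [eval, h]
    · exact Or.inr (Or.inl (by ring))
    · exact Or.inl (by ring)
    · exact Or.inr (Or.inr ⟨i, Or.inr rfl⟩)
    · exact Or.inr (Or.inr ⟨i, Or.inl (by ring)⟩)
  | sup t u iht ihu =>
    rcases max_choice (t.eval n φ) (u.eval n φ) with h | h <;> simp only [eval, h]
    exacts [iht, ihu]
  | inf t u iht ihu =>
    rcases min_choice (t.eval n φ) (u.eval n φ) with h | h <;> simp only [eval, h]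
    exacts [iht, ihu]
  | delta i t ih =>
    rcases Delta_eq_zero_or_eq_one n i (t.eval n φ) with h | h <;> simp only [eval, h]
    · exact Or.inl rfl
    · exact Or.inr (Or.inl rfl)

lemma exists_eval_eq_of_mem_Mset (n : ℕ) {a : Fin r → ℚ} {x : ℚ} (hx : x ∈ Mset r a) :
    ∃ t : LMTerm r, t.eval n a = x := by
  obtain rfl | rfl | ⟨i, rfl | rfl⟩ := hx
  exacts [⟨zero, rfl⟩, ⟨one, rfl⟩, ⟨var i, rfl⟩, ⟨neg (var i), rfl⟩]

def andAll : List (LMTerm r) → LMTerm r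
  | [] => one
  | t :: ts => inf t (andAll ts)

def orAll : List (LMTerm r) → LMTerm r
  | [] => zero
  | t :: ts => sup t (orAll ts)

variable {n : ℕ} {φ : Fin r → ℚ}

lemma eval_andAll_eq_one {ts : List (LMTerm r)} (h : ∀ t ∈ ts, t.eval n φ = 1) :
    (andAll ts).eval n φ = 1 := by
  induction ts with
  | nil => rfl
  | cons t ts ih => simp_all [andAll, eval]

lemma eval_andAll_le {ts : List (LMTerm r)} {t : LMTerm r} (ht : t ∈ ts) :
    (andAll ts).eval n φ ≤ t.eval n φ := by
  induction ts with
  | nil => simp at ht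
  | cons s ts ih =>
    rcases List.mem_cons.mp ht with rfl | ht
    · exact min_le_left _ _
    · exact (min_le_right _ _).trans (ih ht)

lemma eval_orAll_le {ts : List (LMTerm r)} {c : ℚ} (hc : 0 ≤ c)
    (h : ∀ t ∈ ts, t.eval n φ ≤ c) :
    (orAll ts).eval n φ ≤ c := by
  induction ts with
  | nil => exact hc
  | cons t ts ih => simp_all [orAll, eval]

lemma le_eval_orAll {ts : List (LMTerm r)} {t : LMTerm r} (ht : t ∈ ts) :
    t.eval n φ ≤ (orAll ts).eval n φ := by
  induction ts with
  | nil => simp at ht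
  | cons s ts ih =>
    rcases List.mem_cons.mp ht with rfl | ht
    · exact le_max_left _ _
    · exact (ih ht).trans (le_max_right _ _)

end LMTerm

def gridPoint (n : ℕ) {r : ℕ} (v : Fin r → Fin (n + 1)) : Fin r → ℚ :=
  fun i => ((v i : ℕ) : ℚ) / n

lemma gridPoint_mem (n : ℕ) {r : ℕ} (v : Fin r → Fin (n + 1)) (i : Fin r) :
    gridPoint n v i ∈ Ln n :=
  ⟨v i, Nat.lt_succ_iff.mp (v i).isLt, rfl⟩

lemma exists_gridPoint_eq {n r : ℕ} {φ : Fin r → ℚ} (hφ : ∀ i, φ i ∈ Ln n) :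
    ∃ v : Fin r → Fin (n + 1), gridPoint n v = φ := by
  choose k hk hφk using hφ
  exact ⟨fun i => ⟨k i, Nat.lt_succ_of_le (hk i)⟩, funext fun i => (hφk i).symm⟩

namespace LMTerm

variable {n r : ℕ}

def indicator (n : ℕ) (i : Fin r) (j : Fin (n + 1)) : LMTerm r :=
  inf (delta (n + 1 - j) (var i)) (neg (delta (n - j) (var i)))

lemma eval_indicator (i : Fin r) (j : Fin (n + 1)) (w : Fin r → Fin (n + 1)) :
    (indicator n i j).eval n (gridPoint n w) = if w i = j then 1 else 0 := by
  have hj := j.is_le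
  have hw := (w i).is_le
  simp only [indicator, eval, gridPoint, Delta_natCast_div _ hw, Fin.ext_iff]
  split_ifs <;> first | omega | norm_num

def pointIndicator (n : ℕ) (v : Fin r → Fin (n + 1)) : LMTerm r :=
  andAll ((List.finRange r).map fun i => indicator n i (v i))

lemma eval_pointIndicator_self (v : Fin r → Fin (n + 1)) :
    (pointIndicator n v).eval n (gridPoint n v) = 1 :=
  eval_andAll_eq_one <| by simp [eval_indicator]

lemma eval_pointIndicator_nonpos {v w : Fin r → Fin (n + 1)} (h : w ≠ v) :
    (pointIndicator n v).eval n (gridPoint n w) ≤ 0 := by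
  obtain ⟨i, hi⟩ := Function.ne_iff.mp h
  have hmem : indicator n i (v i) ∈ (List.finRange r).map fun i => indicator n i (v i) :=
    List.mem_map.mpr ⟨i, List.mem_finRange i, rfl⟩
  simpa [pointIndicator, eval_indicator, hi] using
    eval_andAll_le (n := n) (φ := gridPoint n w) hmem

end LMTerm

open LMTerm in
lemma representable_of_forall_mem_Mset {n r : ℕ} {f : (Fin r → ℚ) → ℚ}
    (hf : ∀ a : Fin r → ℚ, (∀ i, a i ∈ Ln n) → f a ∈ Mset r a) :
    Representable n r f := by
  choose G hG using fun v => exists_eval_eq_of_mem_Mset n (hf (gridPoint n v) (gridPoint_mem n v))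
  let disjunct v : LMTerm r := inf (pointIndicator n v) (G v)
  refine ⟨orAll ((univ : Finset (Fin r → Fin (n + 1))).toList.map disjunct), fun φ hφ => ?_⟩
  obtain ⟨w, rfl⟩ := exists_gridPoint_eq hφ
  have hf01 := Mset_subset_Icc (fun i => Ln_subset_Icc n (hφ i)) (hf _ hφ)
  refine le_antisymm (eval_orAll_le hf01.1 ?_) ?_
  · simp only [List.mem_map, Finset.mem_toList, Finset.mem_univ, true_and]
    rintro _ ⟨v, rfl⟩
    by_cases hv : w = v
    · subst hv
      exact (min_le_right _ _).trans (hG w).le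
    · exact (min_le_left _ _).trans ((eval_pointIndicator_nonpos hv).trans hf01.1)
  · calc f (gridPoint n w) = (disjunct w).eval n (gridPoint n w) := by
          simp [disjunct, eval, eval_pointIndicator_self, hG, hf01.2]
      _ ≤ _ := le_eval_orAll (List.mem_map.mpr ⟨w, by simp, rfl⟩)

theorem representable_iff_general (n r : ℕ)
    (f : (Fin r → ℚ) → ℚ) :
    Representable n r f ↔
      ∀ a : Fin r → ℚ, (∀ i, a i ∈ Ln n) → f a ∈ Mset r a := by
  refine ⟨?_, representable_of_forall_mem_Mset⟩
  rintro ⟨t, ht⟩ a ha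
  exact ht a ha ▸ t.eval_mem_Mset n a

/-- Main theorem: f is Moisil representable iff f(a⃗) always lies in
{0, 1, a_1, ..., a_r, 1-a_1, ..., 1-a_r}. -/
theorem representable_iff (n r : ℕ) (hn : 2 ≤ n) (hr : 1 ≤ r)
    (f : (Fin r → ℚ) → ℚ) :
    Representable n r f ↔
      ∀ a : Fin r → ℚ, (∀ i, a i ∈ Ln n) → f a ∈ Mset r a :=
  representable_iff_general n r f
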